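/- There is no graph G without isolated vertices whose second largest adjacency eigenvalue satisfies −1 < λ_2(G) < 0. -/

import Mathlib

open SimpleGraph Finset

/-- Adjacency matrix over `ℝ` (classical decidability). -/
noncomputable def adjMatR {n : ℕ} (G : SimpleGraph (Fin n)) : Matrix (Fin n) (Fin n) ℝ :=
  @SimpleGraph.adjMatrix ℝ (Fin n) G (Classical.decRel _) _ _

lemma adjMatR_isHermitian {n : ℕ} (G : SimpleGraph (Fin n)) : (adjMatR G).IsHermitian := by
  have h : (adjMatR G).IsSymm := @SimpleGraph.isSymm_adjMatrix ℝ (Fin n) G (Classical.decRel _) _ _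
  simpa [Matrix.IsHermitian, Matrix.conjTranspose_eq_transpose_of_trivial, Matrix.IsSymm] using h

/-- Multiset of adjacency eigenvalues (with multiplicity). -/
noncomputable def specMS {n : ℕ} (G : SimpleGraph (Fin n)) : Multiset ℝ :=
  Finset.univ.val.map (adjMatR_isHermitian G).eigenvalues

/-- `i`-th largest adjacency eigenvalue (0-indexed). -/
noncomputable def eigval {n : ℕ} (G : SimpleGraph (Fin n)) (i : ℕ) : ℝ :=
  ((specMS G).sort (· ≥ ·)).getD i 0

/-- Graph energy. -/
noncomputable def energy {n : ℕ} (G : SimpleGraph (Fin n)) : ℝ :=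
  ((specMS G).map (fun x => |x|)).sum

/-- ℓ¹ spectral distance. -/
noncomputable def specDist {n : ℕ} (G H : SimpleGraph (Fin n)) : ℝ :=
  ∑ i ∈ Finset.range n, |eigval G i - eigval H i|

/-- number of edges -/
noncomputable def numEdges {n : ℕ} (G : SimpleGraph (Fin n)) : ℕ := G.edgeSet.ncard

/-- `K_2 + (n-2)K_1`: one edge plus isolated vertices. -/
def oneEdgeG (n : ℕ) : SimpleGraph (Fin n) :=
  SimpleGraph.fromRel (fun u v => (u : ℕ) = 0 ∧ (v : ℕ) = 1)

/-- `P_3 + (n-3)K_1`: a path on 3 vertices plus isolated vertices. -/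
def path3G (n : ℕ) : SimpleGraph (Fin n) :=
  SimpleGraph.fromRel (fun u v => ((u : ℕ) = 0 ∧ (v : ℕ) = 1) ∨ ((u : ℕ) = 1 ∧ (v : ℕ) = 2))

/-- Complete bipartite graph `K_{a,b}` on `Fin (a+b)`. -/
def compBip (a b : ℕ) : SimpleGraph (Fin (a + b)) :=
  SimpleGraph.fromRel (fun u v => (u : ℕ) < a ∧ a ≤ (v : ℕ))

/-- `K_{r,s} + tK_1`: complete bipartite plus `t` isolated vertices. -/
def compBipPlus (r s t : ℕ) : SimpleGraph (Fin (r + s + t)) :=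
  SimpleGraph.fromRel (fun u v => (u : ℕ) < r ∧ r ≤ (v : ℕ) ∧ (v : ℕ) < r + s)

/-- `K_1 + K_{n-1}`: an isolated vertex plus a complete graph. -/
def k1PlusComplete (n : ℕ) : SimpleGraph (Fin n) :=
  SimpleGraph.fromRel (fun u v => (u : ℕ) ≠ 0 ∧ (v : ℕ) ≠ 0)

/-- `(K_1 + K_2) ∇ (n-3)K_1`: join of `K_1 + K_2` with `n-3` isolated vertices. -/
def k1k2JoinEmpty (n : ℕ) : SimpleGraph (Fin n) :=
  SimpleGraph.fromRel (fun u v =>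
    ((u : ℕ) = 1 ∧ (v : ℕ) = 2) ∨ ((u : ℕ) < 3 ∧ 3 ≤ (v : ℕ)))

/-! Since the eigenvalues are sorted, `λ₂ < 0` leaves at most one nonnegative eigenvalue. A subspace
on which `x ⬝ᵥ A *ᵥ x ≥ 0` has dimension at most the number of nonnegative eigenvalues, as it meets
the span of the eigenvectors with negative eigenvalues trivially. If `G` is not complete, two
non-adjacent vertices and a neighbour of each contain an induced `P₃` or `2K₂`; on
`span {e_a + e_b, e_b + e_c}`, resp. `span {e_a + e_b, e_c + e_d}`, the form is `2 (s + t) ^ 2`,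
resp. `2 (s ^ 2 + t ^ 2)`, so there are two nonnegative eigenvalues. If `G` is complete,
`A = J - I` has only the eigenvalues `-1` and `n - 1`, so `λ₂ = -1`. -/

namespace Matrix.IsHermitian

variable {ι : Type*} [Fintype ι] [DecidableEq ι] {A : Matrix ι ι ℝ} (hA : A.IsHermitian)

theorem eigenvalues_equivOfCardEq (j : Fin (Fintype.card ι)) :
    hA.eigenvalues (Fintype.equivOfCardEq (Fintype.card_fin _) j) = hA.eigenvalues₀ j := by
  simp [eigenvalues]

theorem dotProduct_mulVec_self_eq_sum (x : ι → ℝ) :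
    x ⬝ᵥ A *ᵥ x =
      ∑ i, hA.eigenvalues i * (star (hA.eigenvectorUnitary : Matrix ι ι ℝ) *ᵥ x) i ^ 2 := by
  set U : Matrix ι ι ℝ := ↑hA.eigenvectorUnitary
  have hUT : Uᵀ = star U := by simp [U, star_eq_conjTranspose]
  conv_lhs => rw [hA.spectral_theorem, Unitary.conjStarAlgAut_apply, ← mulVec_mulVec,
    ← mulVec_mulVec, dotProduct_mulVec, ← mulVec_transpose, hUT]
  simp only [dotProduct, mulVec_diagonal, Function.comp_apply, RCLike.ofReal_real_eq_id, id]
  exact Finset.sum_congr rfl fun i _ => by ring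

theorem finrank_le_card_nonneg_eigenvalues (V : Submodule ℝ (ι → ℝ))
    (hV : ∀ x ∈ V, 0 ≤ x ⬝ᵥ A *ᵥ x) :
    Module.finrank ℝ V ≤ #{i | 0 ≤ hA.eigenvalues i} := by
  set U : Matrix ι ι ℝ := ↑hA.eigenvectorUnitary
  set S := {i | 0 ≤ hA.eigenvalues i}
  let coords : V →ₗ[ℝ] S → ℝ :=
    LinearMap.funLeft ℝ ℝ Subtype.val ∘ₗ (star U).mulVecLin ∘ₗ V.subtype
  by_contra! hlt
  have hcard : Module.finrank ℝ (S → ℝ) < Module.finrank ℝ V := by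
    simpa [S] using hlt
  obtain ⟨⟨x, hxV⟩, hker, hx0⟩ := Submodule.exists_mem_ne_zero_of_ne_bot
    (LinearMap.ker_ne_bot_of_finrank_lt (f := coords) hcard)
  have hx : x ≠ 0 := by simpa using hx0
  have hvanish : ∀ i, 0 ≤ hA.eigenvalues i → (star U *ᵥ x) i = 0 := fun i hi =>
    congrFun (LinearMap.mem_ker.mp hker) (⟨i, hi⟩ : S)
  have hc : star U *ᵥ x ≠ 0 := fun h => hx <| by
    rw [← one_mulVec x, ← Unitary.coe_mul_star_self hA.eigenvectorUnitary, ← mulVec_mulVec]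
    simp [U, h]
  obtain ⟨j, hj⟩ := Function.ne_iff.mp hc
  have hneg : x ⬝ᵥ A *ᵥ x < 0 := by
    rw [hA.dotProduct_mulVec_self_eq_sum, ← Finset.sum_const_zero]
    refine Finset.sum_lt_sum (fun i _ => ?_) ⟨j, Finset.mem_univ _, ?_⟩
    · rcases le_or_gt 0 (hA.eigenvalues i) with hi | hi
      · rw [hvanish i hi]; simp
      · exact mul_nonpos_of_nonpos_of_nonneg hi.le (sq_nonneg _)
    · have hj' : hA.eigenvalues j < 0 := not_le.mp fun h => hj (hvanish j h)
      exact mul_neg_of_neg_of_pos hj' (sq_pos_of_ne_zero hj)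
  exact hneg.not_ge (hV x hxV)

theorem two_le_card_nonneg_eigenvalues {x y : ι → ℝ} (hxy : LinearIndependent ℝ ![x, y])
    (hform : ∀ s t : ℝ, 0 ≤ (s • x + t • y) ⬝ᵥ A *ᵥ (s • x + t • y)) :
    2 ≤ #{i | 0 ≤ hA.eigenvalues i} := by
  have hrank : Module.finrank ℝ (Submodule.span ℝ (Set.range ![x, y])) = 2 := by
    simpa using finrank_span_eq_card hxy
  rw [← hrank]
  refine hA.finrank_le_card_nonneg_eigenvalues _ fun z hz => ?_
  rw [range_cons_cons_empty, Submodule.mem_span_pair] at hz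
  obtain ⟨s, t, rfl⟩ := hz
  exact hform s t

theorem sort_eigenvalues_eq_ofFn_eigenvalues₀ :
    (univ.val.map hA.eigenvalues).sort (· ≥ ·) = List.ofFn hA.eigenvalues₀ := by
  simpa [hA.roots_charpoly_eq_eigenvalues, Multiset.map_map] using
    hA.sort_roots_charpoly_eq_eigenvalues₀

theorem card_nonneg_eigenvalues_le {j : Fin (Fintype.card ι)} (hj : hA.eigenvalues₀ j < 0) :
    #{i | 0 ≤ hA.eigenvalues i} ≤ j := by
  have hcard : #{i | 0 ≤ hA.eigenvalues i} = #{k | 0 ≤ hA.eigenvalues₀ k} :=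
    Finset.card_equiv (Fintype.equivOfCardEq (Fintype.card_fin _)).symm fun i => by
      rw [Finset.mem_filter_univ, Finset.mem_filter_univ]; rfl
  have hsub : ({k | 0 ≤ hA.eigenvalues₀ k} : Finset _) ⊆ Finset.Iio j := fun k hk => by
    simp only [Finset.mem_filter, Finset.mem_univ, true_and] at hk
    exact Finset.mem_Iio.mpr <| lt_of_not_ge fun hjk =>
      (hA.eigenvalues₀_antitone hjk).not_gt (hj.trans_le hk)
  simpa [hcard] using Finset.card_le_card hsub

end Matrix.IsHermitian

open Matrix

namespace SimpleGraph

variable {n : ℕ}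

theorem adjMatR_eq (G : SimpleGraph (Fin n)) [DecidableRel G.Adj] : adjMatR G = G.adjMatrix ℝ := by
  unfold adjMatR; congr

theorem eigval_eq_eigenvalues₀ (G : SimpleGraph (Fin n)) {i : ℕ} (hi : i < n) :
    eigval G i = (adjMatR_isHermitian G).eigenvalues₀ ⟨i, by simpa using hi⟩ := by
  rw [eigval, specMS, IsHermitian.sort_eigenvalues_eq_ofFn_eigenvalues₀,
    List.getD_eq_getElem _ _ (by simpa using hi), List.getElem_ofFn]

theorem eq_neg_one_or_eq_sub_one_of_adjMatR_top_mulVec_eq_smul {f : Fin n → ℝ} {μ : ℝ}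
    (hf : f ≠ 0) (heig : adjMatR ⊤ *ᵥ f = μ • f) : μ = -1 ∨ μ = n - 1 := by
  classical
  have key : ∀ a, ∑ k, f k = (μ + 1) * f a := fun a => by
    have := congrFun heig a
    simp only [adjMatR_eq, adjMatrix_top, mulVec, dotProduct, of_apply, ite_mul, zero_mul,
      one_mul, Finset.sum_ite, Finset.sum_const_zero, zero_add, Pi.smul_apply, smul_eq_mul] at this
    rw [Finset.filter_ne, Finset.sum_erase_eq_sub (mem_univ a)] at this
    linarith
  have hsum : (n : ℝ) * ∑ k, f k = (μ + 1) * ∑ k, f k := by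
    simpa [Finset.mul_sum] using Finset.sum_congr rfl fun a (_ : a ∈ univ) => key a
  by_cases hs : ∑ k, f k = 0
  · obtain ⟨a, ha⟩ := Function.ne_iff.mp hf
    have := key a
    rw [hs, eq_comm, mul_eq_zero] at this
    exact Or.inl (by linarith [this.resolve_right ha])
  · exact Or.inr (by linarith [mul_right_cancel₀ hs hsum])

theorem eigenvalues_adjMatR_top (i : Fin n) :
    (adjMatR_isHermitian ⊤).eigenvalues i = -1 ∨
      (adjMatR_isHermitian ⊤).eigenvalues i = n - 1 := by
  set hA := adjMatR_isHermitian (⊤ : SimpleGraph (Fin n))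
  refine eq_neg_one_or_eq_sub_one_of_adjMatR_top_mulVec_eq_smul ?_ (hA.mulVec_eigenvectorBasis i)
  simpa using hA.eigenvectorBasis.orthonormal.ne_zero i

theorem two_le_card_nonneg_eigenvalues_of_induced_path (G : SimpleGraph (Fin n)) {a b c : Fin n}
    (hab : G.Adj a b) (hbc : G.Adj b c) (hac : ¬ G.Adj a c) (hne : a ≠ c) :
    2 ≤ #{i | 0 ≤ (adjMatR_isHermitian G).eigenvalues i} := by
  classical
  refine (adjMatR_isHermitian G).two_le_card_nonneg_eigenvalues
    (x := Pi.single a 1 + Pi.single b 1) (y := Pi.single b 1 + Pi.single c 1) ?_ fun s t => ?_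
  · refine LinearIndependent.pair_iff.mpr fun s t h => ⟨?_, ?_⟩
    · simpa [hab.ne, hne] using congrFun h a
    · simpa [hne.symm, hbc.ne.symm] using congrFun h c
  · have hca : ¬ G.Adj c a := fun h => hac h.symm
    simp only [smul_add, adjMatR_eq, mulVec_add, mulVec_smul, mulVec_single, MulOpposite.op_one,
      one_smul, dotProduct_add, dotProduct_smul, add_dotProduct, smul_dotProduct, single_dotProduct,
      col_apply, adjMatrix_apply, G.irrefl, hab, hbc, hac, hab.symm, hbc.symm, hca, ↓reduceIte,
      mul_zero, mul_one, zero_add, add_zero, smul_eq_mul]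
    nlinarith [sq_nonneg (s + t)]

theorem two_le_card_nonneg_eigenvalues_of_induced_matching (G : SimpleGraph (Fin n))
    {a b c d : Fin n}
    (hab : G.Adj a b) (hcd : G.Adj c d)
    (hac : a ≠ c ∧ ¬ G.Adj a c) (had : a ≠ d ∧ ¬ G.Adj a d)
    (hbc : b ≠ c ∧ ¬ G.Adj b c) (hbd : b ≠ d ∧ ¬ G.Adj b d) :
    2 ≤ #{i | 0 ≤ (adjMatR_isHermitian G).eigenvalues i} := by
  classical
  refine (adjMatR_isHermitian G).two_le_card_nonneg_eigenvalues
    (x := Pi.single a 1 + Pi.single b 1) (y := Pi.single c 1 + Pi.single d 1) ?_ fun s t => ?_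
  · refine LinearIndependent.pair_iff.mpr fun s t h => ⟨?_, ?_⟩
    · simpa [hab.ne, hac.1, had.1] using congrFun h a
    · simpa [hac.1.symm, hbc.1.symm, hcd.ne] using congrFun h c
  · have hca : ¬ G.Adj c a := fun h => hac.2 h.symm
    have hda : ¬ G.Adj d a := fun h => had.2 h.symm
    have hcb : ¬ G.Adj c b := fun h => hbc.2 h.symm
    have hdb : ¬ G.Adj d b := fun h => hbd.2 h.symm
    simp only [smul_add, adjMatR_eq, mulVec_add, mulVec_smul, mulVec_single, MulOpposite.op_one,
      one_smul, dotProduct_add, dotProduct_smul, add_dotProduct, smul_dotProduct, single_dotProduct,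
      col_apply, adjMatrix_apply, G.irrefl, hab, hcd, hab.symm, hcd.symm, hac.2, had.2, hbc.2,
      hbd.2, hca, hda, hcb, hdb, ↓reduceIte, mul_zero, mul_one, zero_add, add_zero, smul_eq_mul]
    nlinarith [sq_nonneg s, sq_nonneg t]

theorem two_le_card_nonneg_eigenvalues_of_not_adj (G : SimpleGraph (Fin n))
    (h : ∀ v, ∃ w, G.Adj v w) {u v : Fin n} (huv : u ≠ v) (hnadj : ¬ G.Adj u v) :
    2 ≤ #{i | 0 ≤ (adjMatR_isHermitian G).eigenvalues i} := by
  obtain ⟨u', hu'⟩ := h u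
  obtain ⟨v', hv'⟩ := h v
  by_cases hu'v : G.Adj u' v
  · exact two_le_card_nonneg_eigenvalues_of_induced_path G hu' hu'v hnadj huv
  by_cases huv' : G.Adj u v'
  · exact two_le_card_nonneg_eigenvalues_of_induced_path G huv' hv'.symm hnadj huv
  have huv'_ne : u ≠ v' := by rintro rfl; exact hnadj hv'.symm
  by_cases hu'v' : G.Adj u' v'
  · exact two_le_card_nonneg_eigenvalues_of_induced_path G hu' hu'v' huv' huv'_ne
  have hu'v'_ne : u' ≠ v' := by rintro rfl; exact hu'v hv'.symm
  have hu'v_ne : u' ≠ v := by rintro rfl; exact hnadj hu'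
  exact two_le_card_nonneg_eigenvalues_of_induced_matching G hu' hv'
    ⟨huv, hnadj⟩ ⟨huv'_ne, huv'⟩ ⟨hu'v_ne, hu'v⟩ ⟨hu'v'_ne, hu'v'⟩

end SimpleGraph

theorem no_secondEig_in_Ioo (n : ℕ) (hn : 2 ≤ n) (G : SimpleGraph (Fin n))
    (h : ∀ v, ∃ w, G.Adj v w) :
    ¬ (-1 < eigval G 1 ∧ eigval G 1 < 0) := by
  rintro ⟨hgt, hlt⟩
  set hA := adjMatR_isHermitian G
  rw [eigval_eq_eigenvalues₀ G (by omega)] at hgt hlt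
  by_cases hG : G = ⊤
  · subst hG
    rw [← hA.eigenvalues_equivOfCardEq] at hgt hlt
    have hn' : (2 : ℝ) ≤ n := by exact_mod_cast hn
    rcases eigenvalues_adjMatR_top _ with heq | heq <;> rw [heq] at hgt hlt <;> linarith
  · obtain ⟨u, v, huv, hnadj⟩ := ne_top_iff_exists_not_adj.mp hG
    have h2 := two_le_card_nonneg_eigenvalues_of_not_adj G h huv hnadj
    have h1 := hA.card_nonneg_eigenvalues_le hlt
    exact absurd (h2.trans h1) (by simp)
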